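/- Let k ∈ K and let Q be a connected subset of ω⁰(k) = ⋃_{x∈X} ω⁰(x,k). Then Q ⊆ ω⁰(y,k) for every y ∈ Q. -/

import Mathlib

/-!
A point `a ∈ ω⁰(x,k)` is `ε`-recurrent for every `ε > 0`: restarting an `ε/2`-motion from `x` at a
moment when it passes close to `a` gives an `ε`-motion from `a` that returns to `a`. Uniform
continuity of the flow on `[0,T] × X` lets one switch, at a late moment when an `ε`-motion passes
close to a point `c`, to a finer recurrent motion from `c` and still have an `ε`-motion. So for
fixed `ε`, being a limit point of such a glued motion from `y` is a relatively clopen property on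
`Q`, and connectedness spreads it from `y` to all of `Q`.
-/
open Filter Topology Metric Set MeasureTheory
open scoped ENNReal

/-- A parameter-dependent semiflow on a metric space `X` with parameter space `K`:
a map `f : [0,∞) × X × K → X` (encoded with time in `ℝ`, with conditions only for
nonnegative times), continuous on `[0,∞) × X × K`, satisfying the semigroup
identities, and injective in `x` for each fixed time and parameter. -/
structure PSemiflow (X K : Type*) [MetricSpace X] [MetricSpace K] where
  f : ℝ → X → K → X
  cont : ContinuousOn (fun p : ℝ × X × K => f p.1 p.2.1 p.2.2) {p : ℝ × X × K | 0 ≤ p.1}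
  map_zero : ∀ x k, f 0 x k = x
  semigroup : ∀ t t' : ℝ, 0 ≤ t → 0 ≤ t' → ∀ x k, f t (f t' x k) k = f (t + t') x k
  inj : ∀ t : ℝ, 0 ≤ t → ∀ k, Function.Injective fun x => f t x k

namespace PSemiflow

variable {X K : Type*} [MetricSpace X] [MetricSpace K] (S : PSemiflow X K)

/-- The ω-limit set `ω(x,k)`: all limits of `f(tₙ,x,k)` along sequences `tₙ → ∞`. -/
def omega (x : X) (k : K) : Set X :=
  {y | ∃ t : ℕ → ℝ, (∀ n, 0 ≤ t n) ∧ Tendsto t atTop atTop ∧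
      Tendsto (fun n => S.f (t n) x k) atTop (𝓝 y)}

/-- The complete ω-limit set `ω(k) = ⋃ₓ ω(x,k)`. -/
def omegaK (k : K) : Set X := ⋃ x : X, S.omega x k

/-- A `(k,x,ε)`-motion (with time scale `T`): a perturbed motion which on every
interval of length `T` departs from the true motion by less than `ε`. -/
def IsEpsMotion (T ε : ℝ) (k : K) (x : X) (φ : ℝ → X) : Prop :=
  φ 0 = x ∧ ∀ t : ℝ, 0 ≤ t → ∀ τ ∈ Icc (0:ℝ) T, dist (φ (t + τ)) (S.f τ (φ t) k) < ε

/-- `ω^ε(x,k)`: ω-limit points of all `(k,x,ε)`-motions. -/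
def omegaEps (T ε : ℝ) (x : X) (k : K) : Set X :=
  {y | ∃ φ : ℝ → X, S.IsEpsMotion T ε k x φ ∧
      ∃ t : ℕ → ℝ, (∀ n, 0 ≤ t n) ∧ Tendsto t atTop atTop ∧
        Tendsto (fun n => φ (t n)) atTop (𝓝 y)}

/-- `ω⁰(x,k) = ⋂_{ε>0} ω^ε(x,k)`. -/
def omegaZero (T : ℝ) (x : X) (k : K) : Set X := ⋂ ε > (0:ℝ), S.omegaEps T ε x k

end PSemiflow


namespace PSemiflow

variable {X K : Type*} [MetricSpace X] [MetricSpace K] (S : PSemiflow X K) {T : ℝ} {k : K}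

theorem IsEpsMotion.mono {S : PSemiflow X K} {ε ε' : ℝ} {x : X} {φ : ℝ → X}
    (h : S.IsEpsMotion T ε' k x φ) (hε : ε' ≤ ε) : S.IsEpsMotion T ε k x φ :=
  ⟨h.1, fun t ht τ hτ => (h.2 t ht τ hτ).trans_le hε⟩

theorem exists_dist_flow_lt [CompactSpace X] (T : ℝ) (k : K) {ε : ℝ} (hε : 0 < ε) :
    ∃ r > 0, ∀ s ∈ Icc (0 : ℝ) T, ∀ a b : X, dist a b < r →
      dist (S.f s a k) (S.f s b k) < ε := by
  have : CompactSpace (Icc (0 : ℝ) T) := isCompact_iff_compactSpace.mp isCompact_Icc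
  have hcont : Continuous fun p : Icc (0 : ℝ) T × X => S.f p.1 p.2 k :=
    S.cont.comp_continuous (f := fun p : Icc (0 : ℝ) T × X => ((p.1 : ℝ), p.2, k))
      (by fun_prop) fun p => p.1.2.1
  obtain ⟨r, hr, hmod⟩ :=
    Metric.uniformContinuous_iff.mp (CompactSpace.uniformContinuous_of_continuous hcont) ε hε
  refine ⟨r, hr, fun s hs a b hab => hmod (a := (⟨s, hs⟩, a)) (b := (⟨s, hs⟩, b)) ?_⟩
  rwa [Prod.dist_eq, dist_self, max_eq_right dist_nonneg]

theorem mem_omegaEps_iff {ε : ℝ} {x y : X} :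
    y ∈ S.omegaEps T ε x k ↔ ∃ φ, S.IsEpsMotion T ε k x φ ∧ MapClusterPt y atTop φ := by
  constructor
  · rintro ⟨φ, hφ, t, -, ht, hφt⟩
    exact ⟨φ, hφ, hφt.mapClusterPt.of_comp ht⟩
  · rintro ⟨φ, hφ, hy⟩
    obtain ⟨t, hφt, ht⟩ := hy.exists_seq_tendsto
    have hmax : (fun n => φ (t n)) =ᶠ[atTop] fun n => φ (max (t n) 0) :=
      (ht.eventually_ge_atTop 0).mono fun n hn => congrArg φ (max_eq_left hn).symm
    exact ⟨φ, hφ, fun n => max (t n) 0, fun n => le_max_right _ _,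
      tendsto_atTop_mono (fun n => le_max_left _ _) ht, (hφt.congr' hmax :)⟩

theorem mem_omegaEps_self_of_mem_omegaZero [CompactSpace X] {x a : X}
    (ha : a ∈ S.omegaZero T x k) {ε : ℝ} (hε : 0 < ε) : a ∈ S.omegaEps T ε a k := by
  obtain ⟨r, hr, hmod⟩ := S.exists_dist_flow_lt T k (half_pos hε)
  obtain ⟨φ, hφ, hφa⟩ := (S.mem_omegaEps_iff).1 (mem_iInter₂.1 ha (ε / 2) (half_pos hε))
  obtain ⟨s₀, hs₀a, hs₀⟩ :=
    ((hφa.frequently (ball_mem_nhds a hr)).and_eventually (eventually_ge_atTop 0)).exists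
  set ψ := Function.update (fun s => φ (s + s₀)) 0 a
  have hψ₀ : ψ 0 = a := Function.update_self ..
  have hψ : ∀ s ≠ 0, ψ s = φ (s + s₀) := fun s hs => Function.update_of_ne hs _ _
  refine (S.mem_omegaEps_iff).2 ⟨ψ, ⟨hψ₀, fun t ht τ hτ => ?_⟩, ?_⟩
  · rcases ht.eq_or_lt with rfl | ht
    · rcases hτ.1.eq_or_lt with rfl | hτ₀
      · simp [hψ₀, S.map_zero, hε]
      rw [zero_add, hψ τ hτ₀.ne', hψ₀]
      calc dist (φ (τ + s₀)) (S.f τ a k)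
          ≤ dist (φ (τ + s₀)) (S.f τ (φ s₀) k) + dist (S.f τ (φ s₀) k) (S.f τ a k) :=
            dist_triangle _ _ _
        _ < ε / 2 + ε / 2 := by
            rw [add_comm τ]
            exact add_lt_add (hφ.2 s₀ hs₀ τ hτ) (hmod τ hτ _ _ hs₀a)
        _ = ε := add_halves ε
    · rw [hψ t ht.ne', hψ (t + τ) (by linarith [hτ.1]), add_right_comm]
      exact (hφ.2 (t + s₀) (by linarith) τ hτ).trans (half_lt_self hε)
  · have hshift : MapClusterPt a atTop fun s => φ (s + s₀) :=
      mapClusterPt_comp.2 (by rwa [map_add_atTop_eq])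
    exact hshift.congrFun ((eventually_gt_atTop 0).mono fun s hs => (hψ s hs.ne').symm)

/-- For `ε' < ε`, the finer tail leaves room to glue a further motion onto an `ε`-motion. -/
def omegaEpsTail (T ε ε' : ℝ) (x : X) (k : K) : Set X :=
  {y | ∃ φ : ℝ → X, S.IsEpsMotion T ε k x φ ∧
    (∀ᶠ t in atTop, ∀ τ ∈ Icc (0 : ℝ) T, dist (φ (t + τ)) (S.f τ (φ t) k) < ε') ∧
    MapClusterPt y atTop φ}

theorem omegaEpsTail_subset_omegaEps {ε ε' : ℝ} {x : X} :
    S.omegaEpsTail T ε ε' x k ⊆ S.omegaEps T ε x k :=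
  fun _ ⟨φ, hφ, _, hy⟩ => (S.mem_omegaEps_iff).2 ⟨φ, hφ, hy⟩

theorem omegaEps_subset_omegaEpsTail {ε ε' : ℝ} {x : X} (hε : ε' ≤ ε) :
    S.omegaEps T ε' x k ⊆ S.omegaEpsTail T ε ε' x k := fun _ hy =>
  let ⟨φ, hφ, hy⟩ := (S.mem_omegaEps_iff).1 hy
  ⟨φ, hφ.mono hε, (eventually_ge_atTop 0).mono fun t ht => hφ.2 t ht, hy⟩

theorem IsEpsMotion.piecewise {S : PSemiflow X K} {ε ε' ε₃ r t₀ t₁ : ℝ} {x b : X}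
    {φ ψ : ℝ → X}
    (hmod : ∀ s ∈ Icc (0 : ℝ) T, ∀ a a' : X, dist a a' < r →
      dist (S.f s a k) (S.f s a' k) < ε₃)
    (hφ : S.IsEpsMotion T ε k x φ)
    (hφ' : ∀ t ≥ t₀, ∀ τ ∈ Icc (0 : ℝ) T, dist (φ (t + τ)) (S.f τ (φ t) k) < ε')
    (hψ : S.IsEpsMotion T ε' k b ψ) (ht₁ : 0 < t₁) (ht₀₁ : t₀ + T ≤ t₁)
    (hjump : dist (φ t₁) b < r) (hε'r : ε' ≤ r) (hε₃ : 0 < ε₃) (hε : ε' + 2 * ε₃ ≤ ε) :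
    S.IsEpsMotion T ε k x (fun u => if u < t₁ then φ u else ψ (u - t₁)) := by
  refine ⟨by simp only [if_pos ht₁, hφ.1], fun t ht τ hτ => ?_⟩
  by_cases hτt : t + τ < t₁
  · simp only [if_pos hτt, if_pos (show t < t₁ by linarith [hτ.1])]
    exact hφ.2 t ht τ hτ
  by_cases htt : t < t₁
  · simp only [if_neg hτt, if_pos htt]
    set s := t + τ - t₁
    have hs : s ∈ Icc 0 T := ⟨by linarith, by linarith [hτ.2]⟩
    have hv : t₁ - t ∈ Icc 0 T := ⟨by linarith, by linarith [hτ.2]⟩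
    have hflow : S.f τ (φ t) k = S.f s (S.f (t₁ - t) (φ t) k) k := by
      rw [S.semigroup _ _ hs.1 hv.1]; congr 1; ring
    have h₁ : dist (ψ s) (S.f s b k) < ε' := by
      simpa only [zero_add, hψ.1] using hψ.2 0 le_rfl s hs
    have h₂ : dist (S.f s b k) (S.f s (φ t₁) k) < ε₃ := hmod s hs _ _ (by rwa [dist_comm])
    have h₃ : dist (S.f s (φ t₁) k) (S.f τ (φ t) k) < ε₃ := by
      rw [hflow]
      refine hmod s hs _ _ ?_
      have := hφ' t (by linarith [hτ.2]) (t₁ - t) hv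
      rw [add_sub_cancel] at this
      linarith
    calc dist (ψ s) (S.f τ (φ t) k)
        ≤ dist (ψ s) (S.f s b k) + dist (S.f s b k) (S.f s (φ t₁) k) +
            dist (S.f s (φ t₁) k) (S.f τ (φ t) k) := dist_triangle4 _ _ _ _
      _ < ε' + ε₃ + ε₃ := by gcongr
      _ ≤ ε := by linarith
  · simp only [if_neg hτt, if_neg htt]
    rw [show t + τ - t₁ = t - t₁ + τ by ring]
    exact (hψ.2 _ (by linarith) τ hτ).trans_le (by linarith)

theorem mem_omegaEpsTail_of_dist_lt {ε ε' ε₃ r : ℝ} {x b c : X}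
    (hmod : ∀ s ∈ Icc (0 : ℝ) T, ∀ a a' : X, dist a a' < r →
      dist (S.f s a k) (S.f s a' k) < ε₃)
    (hε'r : ε' ≤ r) (hε₃ : 0 < ε₃) (hε : ε' + 2 * ε₃ ≤ ε)
    (hb : b ∈ S.omegaEpsTail T ε ε' x k) (hc : c ∈ S.omegaEps T ε' c k) (hbc : dist b c < r) :
    c ∈ S.omegaEpsTail T ε ε' x k := by
  obtain ⟨φ, hφ, hφ', hφb⟩ := hb
  obtain ⟨ψ, hψ, hψc⟩ := (S.mem_omegaEps_iff).1 hc
  obtain ⟨t₀, ht₀⟩ := eventually_atTop.1 hφ'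
  obtain ⟨t₁, hφt₁, ht₁⟩ := ((hφb.frequently (ball_mem_nhds b (sub_pos.2 hbc))).and_eventually
    (eventually_gt_atTop (max (t₀ + T) 0))).exists
  rw [max_lt_iff] at ht₁
  have hjump : dist (φ t₁) c < r := by
    linarith [dist_triangle (φ t₁) b c, mem_ball.1 hφt₁]
  have htail : ∀ u ≥ t₁, (if u < t₁ then φ u else ψ (u - t₁)) = ψ (u - t₁) :=
    fun u hu => if_neg hu.not_gt
  refine ⟨_, hφ.piecewise hmod ht₀ hψ ht₁.2 ht₁.1.le hjump hε'r hε₃ hε, ?_, ?_⟩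
  · filter_upwards [eventually_ge_atTop t₁] with t ht τ hτ
    rw [htail t ht, htail (t + τ) (by linarith [hτ.1]), show t + τ - t₁ = t - t₁ + τ by ring]
    exact hψ.2 _ (by linarith) τ hτ
  · have hshift : MapClusterPt c atTop fun u => ψ (u - t₁) :=
      mapClusterPt_comp.2 (by rwa [map_sub_atTop_eq])
    exact hshift.congrFun ((eventually_ge_atTop t₁).mono fun u hu => (htail u hu).symm)

end PSemiflow

theorem connected_subset_omegaZeroK_general {X K : Type*} [MetricSpace X] [CompactSpace X]
    [MetricSpace K] (S : PSemiflow X K) (T : ℝ)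
    (k : K) (Q : Set X) (hQ : Q ⊆ ⋃ x : X, S.omegaZero T x k)
    (hconn : IsPreconnected Q) :
    ∀ y ∈ Q, Q ⊆ S.omegaZero T y k := by
  have hrec : ∀ c ∈ Q, ∀ ε > 0, c ∈ S.omegaEps T ε c k := fun c hc _ hε =>
    (mem_iUnion.1 (hQ hc)).elim fun _ hx => S.mem_omegaEps_self_of_mem_omegaZero hx hε
  intro y hy z hz
  refine mem_iInter₂.2 fun ε hε => ?_
  obtain ⟨r, hr, hmod⟩ := S.exists_dist_flow_lt T k (by positivity : 0 < ε / 4)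
  set ε' := min (ε / 2) r
  have hε' : 0 < ε' := lt_min (by positivity) hr
  have hε'ε : ε' ≤ ε / 2 := min_le_left _ _
  set F := S.omegaEpsTail T ε ε' y k
  have hstep : ∀ b, ∀ c ∈ Q, dist b c < r → b ∈ F → c ∈ F :=
    fun b c hc hbc hb => S.mem_omegaEpsTail_of_dist_lt hmod (min_le_right _ _)
      (by positivity) (by linarith) hb (hrec c hc ε' hε') hbc
  have hyz : y ∈ F ↔ z ∈ F := by
    refine hconn.induction₂ (fun a b => a ∈ F ↔ b ∈ F) (fun a ha => ?_)
      (fun _ _ _ _ _ _ => Iff.trans) (fun _ _ _ _ => Iff.symm) hy hz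
    filter_upwards [self_mem_nhdsWithin, mem_nhdsWithin_of_mem_nhds (ball_mem_nhds a hr)]
      with b hb hab
    exact ⟨hstep a b hb (by rwa [dist_comm]), hstep b a ha hab⟩
  exact S.omegaEpsTail_subset_omegaEps
    (hyz.1 (S.omegaEps_subset_omegaEpsTail (by linarith) (hrec y hy ε' hε')))

/-- Proposition 4.11: if `Q` is a connected subset of `ω⁰(k) = ⋃ₓ ω⁰(x,k)`, then
`Q ⊆ ω⁰(y,k)` for every `y ∈ Q`. -/
theorem connected_subset_omegaZeroK {X K : Type*} [MetricSpace X] [CompactSpace X]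
    [MetricSpace K] [CompactSpace K] (S : PSemiflow X K) (T : ℝ) (hT : 0 < T)
    (k : K) (Q : Set X) (hQ : Q ⊆ ⋃ x : X, S.omegaZero T x k)
    (hconn : IsPreconnected Q) :
    ∀ y ∈ Q, Q ⊆ S.omegaZero T y k :=
  connected_subset_omegaZeroK_general S T k Q hQ hconn
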